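/- arXiv:2003.09927 — 2 statements merged into one kernel-verified Lean document; each statement's English description precedes it below -/
import Mathlib

section
/- Let Γ be a finite simplicial connected graph. If the Bestvina–Brady group H_Γ is a free abelian group (i.e., isomorphic to ℤ^n for some n ≥ 0), then Γ is a complete graph. -/
/-- The relator set of the right-angled Artin group of a simple graph:
commutators of adjacent vertices. -/
def raagRels {V : Type*} (G : SimpleGraph V) : Set (FreeGroup V) :=
  {r | ∃ v w : V, G.Adj v w ∧
    r = FreeGroup.of v * FreeGroup.of w * (FreeGroup.of v)⁻¹ * (FreeGroup.of w)⁻¹}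

/-- The right-angled Artin group of a simple graph. -/
abbrev RAAG {V : Type*} (G : SimpleGraph V) : Type _ := PresentedGroup (raagRels G)

/-- The homomorphism `A_Γ → ℤ` sending every vertex generator to `1`. -/
def bbHom {V : Type*} (G : SimpleGraph V) : RAAG G →* Multiplicative ℤ :=
  PresentedGroup.toGroup (f := fun _ : V => Multiplicative.ofAdd (1 : ℤ)) (by
    rintro r ⟨v, w, -, rfl⟩
    simp [mul_comm])

/-!
For vertices `a`, `b` with a common neighbour `u`, the elements `a u⁻¹` and `b u⁻¹`
lie in `H_Γ`. If `H_Γ` is abelian they commute, and since `u` commutes with `a` and `b`, so do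
`a` and `b`. But non-adjacent distinct generators of `A_Γ` do not commute: sending them to two
non-commuting transpositions of `Fin 3` and every other vertex to `1` defines a homomorphism.
Hence any two vertices at distance two are adjacent, so a connected `Γ` is complete.
-/

theorem SimpleGraph.Preconnected.eq_top_of_adj_of_adj {V : Type*} {G : SimpleGraph V}
    (hG : G.Preconnected) (h : ∀ u a b, G.Adj u a → G.Adj u b → a ≠ b → G.Adj a b) :
    G = ⊤ := by
  have reach : ∀ v w : V, G.Reachable v w → v = w ∨ G.Adj v w := by
    rintro v w ⟨p⟩
    induction p with
    | nil => exact .inl rfl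
    | cons hadj _ ih =>
      rcases ih with rfl | hadj'
      · exact .inr hadj
      · exact or_iff_not_imp_left.2 (h _ _ _ hadj.symm hadj')
  ext v w
  exact ⟨SimpleGraph.Adj.ne, fun hvw => (reach v w (hG v w)).resolve_left hvw⟩

theorem Commute.of_mul_inv_of_commute {G : Type*} [Group G] {a b u : G}
    (hab : Commute (a * u⁻¹) (b * u⁻¹)) (hua : Commute u a) (hub : Commute u b) :
    Commute a b := by
  have hau : Commute (a * u⁻¹) u := hua.symm.mul_left (Commute.refl u).inv_left
  have hbu : Commute u (b * u⁻¹) := hub.mul_right (Commute.refl u).inv_right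
  simpa using (hab.mul_right hau).mul_left (hbu.mul_right (Commute.refl u))

namespace RAAG

variable {V : Type*} {G : SimpleGraph V}

theorem commute_of_adj {p q : V} (hpq : G.Adj p q) :
    Commute (PresentedGroup.of p : RAAG G) (PresentedGroup.of q) :=
  commutatorElement_eq_one_iff_commute.mp (PresentedGroup.one_of_mem ⟨p, q, hpq, rfl⟩)

def lift {H : Type*} [Group H] (f : V → H) (hf : ∀ p q, G.Adj p q → Commute (f p) (f q)) :
    RAAG G →* H :=
  PresentedGroup.toGroup (f := f) <| by
    rintro r ⟨p, q, hpq, rfl⟩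
    simpa [commutatorElement_def] using commutatorElement_eq_one_iff_commute.mpr (hf p q hpq)

@[simp]
theorem lift_of {H : Type*} [Group H] (f : V → H) (hf : ∀ p q, G.Adj p q → Commute (f p) (f q))
    (v : V) : lift f hf (PresentedGroup.of v) = f v :=
  PresentedGroup.toGroup.of _

theorem not_commute_of_not_adj {a b : V} (hab : a ≠ b) (hnadj : ¬G.Adj a b) :
    ¬Commute (PresentedGroup.of a : RAAG G) (PresentedGroup.of b) := by
  classical
  let f : V → Equiv.Perm (Fin 3) := fun x =>
    if x = a then Equiv.swap 0 1 else if x = b then Equiv.swap 1 2 else 1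
  -- no edge has both endpoints in `{a, b}`, so one of `f p`, `f q` is `1`
  have hf : ∀ p q, G.Adj p q → Commute (f p) (f q) := by
    intro p q hpq
    simp only [f]
    split_ifs <;> subst_vars <;> simp_all [G.adj_comm]
  have hswap : ¬Commute (Equiv.swap (0 : Fin 3) 1) (Equiv.swap 1 2) := by
    rw [Commute, SemiconjBy]
    decide
  intro hcomm
  exact hswap (by simpa [f, hab.symm] using hcomm.map (lift f hf))

theorem of_mul_inv_of_mem_ker (v u : V) :
    (PresentedGroup.of v * (PresentedGroup.of u)⁻¹ : RAAG G) ∈ (bbHom G).ker := by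
  simp [bbHom, PresentedGroup.toGroup.of]

theorem adj_of_adj_of_adj_of_ker_commute (hker : ∀ x y : (bbHom G).ker, Commute x y)
    {u a b : V} (hua : G.Adj u a) (hub : G.Adj u b) (hab : a ≠ b) : G.Adj a b := by
  by_contra hnadj
  refine not_commute_of_not_adj hab hnadj (Commute.of_mul_inv_of_commute ?_
    (commute_of_adj hua) (commute_of_adj hub))
  exact congrArg Subtype.val
    (hker ⟨_, of_mul_inv_of_mem_ker a u⟩ ⟨_, of_mul_inv_of_mem_ker b u⟩).eq

end RAAG

theorem complete_of_bb_free_abelian_general {V : Type*} (G : SimpleGraph V)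
    (hconn : G.Connected)
    (h : ∃ n : ℕ, Nonempty ((bbHom G).ker ≃* Multiplicative (Fin n → ℤ))) :
    G = ⊤ := by
  obtain ⟨n, ⟨e⟩⟩ := h
  have hker : ∀ x y : (bbHom G).ker, Commute x y := fun x y =>
    e.injective (by rw [map_mul, map_mul, mul_comm])
  exact hconn.preconnected.eq_top_of_adj_of_adj fun _ _ _ hua hub hab =>
    RAAG.adj_of_adj_of_adj_of_ker_commute hker hua hub hab

/-- If `Γ` is a finite connected simplicial graph and the Bestvina–Brady group `H_Γ`
is a free abelian group (isomorphic to `ℤ^n` for some `n ≥ 0`), then `Γ` is a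
complete graph. -/
theorem complete_of_bb_free_abelian {V : Type*} [Fintype V] (G : SimpleGraph V)
    (hconn : G.Connected)
    (h : ∃ n : ℕ, Nonempty ((bbHom G).ker ≃* Multiplicative (Fin n → ℤ))) :
    G = ⊤ :=
  complete_of_bb_free_abelian_general G hconn h
end

section
/- Let Γ be a finite simplicial graph and suppose the Bestvina–Brady group H_Γ acts on a tree T by graph automorphisms in such a way that the element vw⁻¹ fixes a vertex of T for every directed edge (v,w) of Γ. Then for any clique K of Γ, the subgroup H_K of H_Γ generated by the elements vw⁻¹ over all directed edges (v,w) with both endpoints in K fixes a vertex of T. -/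
/-!
Since `K` is a clique, the finitely many generators `v w⁻¹` of `H_K` pairwise commute, and each is
elliptic. Commuting elliptic automorphisms of a tree have a common fixed vertex: if `a` fixes `y`
and commutes with the others, it preserves the subtree `F` of their common fixed vertices, and
the vertex of `F` nearest to `y` is unique, hence fixed by `a`.
-/

open Function Set

namespace SimpleGraph

variable {V W : Type*} {G : SimpleGraph V}

/-- In a tree, the path-convex sets are the vertex sets of subtrees. -/
def IsPathConvex (G : SimpleGraph V) (F : Set V) : Prop :=
  ∀ ⦃u v⦄, u ∈ F → v ∈ F → ∀ p : G.Walk u v, p.IsPath → ∀ w ∈ p.support, w ∈ F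

lemma IsAcyclic.eq_of_isPath (hG : G.IsAcyclic) {u v : V} {p q : G.Walk u v}
    (hp : p.IsPath) (hq : q.IsPath) : p = q :=
  congrArg Subtype.val ((hG.subsingleton_path u v).elim ⟨p, hp⟩ ⟨q, hq⟩)

lemma IsAcyclic.length_eq_dist (hG : G.IsAcyclic) {u v : V} {p : G.Walk u v}
    (hp : p.IsPath) : p.length = G.dist u v := by
  obtain ⟨q, hq, hlen⟩ := p.reachable.exists_path_of_dist
  rw [hG.eq_of_isPath hp hq, hlen]

lemma IsAcyclic.dist_map {G' : SimpleGraph W} (hG' : G'.IsAcyclic) {f : G →g G'}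
    (hf : Injective f) {u v : V} (h : G.Reachable u v) :
    G'.dist (f u) (f v) = G.dist u v := by
  obtain ⟨p, hp, hlen⟩ := h.exists_path_of_dist
  rw [← hlen, ← hG'.length_eq_dist (hp.map hf), Walk.length_map]

lemma IsAcyclic.isPathConvex_fixedPoints (hG : G.IsAcyclic) {f : G →g G} (hf : Injective f) :
    G.IsPathConvex (fixedPoints f) := by
  intro u v hu hv p hp w hw
  have hmap : (p.map f).copy hu hv = p :=
    hG.eq_of_isPath ((Walk.isPath_copy _ _ _).2 (hp.map hf)) hp
  have hsupp : p.support.map f = p.support := by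
    rw [← Walk.support_map, ← Walk.support_copy _ hu hv, hmap]
  exact (List.map_eq_map_iff.1 (hsupp.trans p.support.map_id.symm)) w hw

lemma IsTree.eq_penultimate_of_dist_eq_add_one (hT : G.IsTree) {y a b : V} {q : G.Walk y a}
    (hq : q.IsPath) (hab : G.Adj a b) (hd : G.dist y a = G.dist y b + 1) :
    b = q.penultimate := by
  classical
  refine hT.isAcyclic.eq_penultimate_of_adj_end hq hab ?_
  by_contra hb
  obtain ⟨p, hp, hlen⟩ := (hT.connected y b).exists_path_of_dist
  have ha := hT.isAcyclic.mem_support_of_ne_mem_support_of_adj_of_isPath hp hq hab.symm hb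
  have := (dist_le (p.takeUntil a ha)).trans (p.length_takeUntil_le_length ha)
  omega

/-- `b` is the neighbour of `a` towards `y`; a path avoiding it keeps moving away from `y`. -/
lemma IsTree.dist_eq_add_length (hT : G.IsTree) (y : V) {a b c : V} (hab : G.Adj a b)
    (hd : G.dist y a = G.dist y b + 1) (p : G.Walk a c) (hp : p.IsPath) (hb : b ∉ p.support) :
    G.dist y c = G.dist y a + p.length := by
  induction p generalizing b with
  | nil => rfl
  | @cons a a' c haa' p ih =>
    rw [Walk.cons_isPath_iff] at hp
    rw [Walk.support_cons, List.mem_cons, not_or] at hb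
    obtain hdown | hup := hT.dist_eq_dist_add_one_of_adj y haa'
    · obtain ⟨q, hq, -⟩ := (hT.connected y a).exists_path_of_dist
      have hba' : b = a' := (hT.eq_penultimate_of_dist_eq_add_one hq hab hd).trans
        (hT.eq_penultimate_of_dist_eq_add_one hq haa' hdown).symm
      exact absurd (hba' ▸ p.start_mem_support) hb.2
    · rw [ih haa'.symm hup hp.1 hp.2, Walk.length_cons]
      omega

lemma IsTree.eq_of_forall_dist_le (hT : G.IsTree) {F : Set V} (hF : G.IsPathConvex F)
    {y u v : V} (hu : u ∈ F) (hmin : ∀ w ∈ F, G.dist y u ≤ G.dist y w) (hv : v ∈ F)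
    (hd : G.dist y v = G.dist y u) : u = v := by
  obtain ⟨p, hp⟩ := (hT.connected u v).exists_isPath
  cases p with
  | nil => rfl
  | @cons _ w _ huw p =>
    have hwF : w ∈ F := hF hu hv _ hp w (by simp)
    rw [Walk.cons_isPath_iff] at hp
    have hup : G.dist y w = G.dist y u + 1 := by
      have := hmin w hwF
      have := hT.dist_eq_dist_add_one_of_adj y huw
      omega
    have := hT.dist_eq_add_length y huw.symm hup p hp.1 hp.2
    omega

lemma IsTree.exists_isFixedPt_of_mapsTo (hT : G.IsTree) {f : G →g G} (hf : Injective f)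
    {F : Set V} (hF : G.IsPathConvex F) (hne : F.Nonempty) (hfF : MapsTo f F F)
    {y : V} (hy : IsFixedPt f y) : ∃ x ∈ F, IsFixedPt f x := by
  set u := argminOn (G.dist y) F hne
  have hu : u ∈ F := argminOn_mem _ _ _
  have hd : G.dist y (f u) = G.dist y u := by
    conv_lhs => rw [← hy.eq]
    exact hT.isAcyclic.dist_map hf (hT.connected y u)
  exact ⟨u, hu, (hT.eq_of_forall_dist_le hF hu (fun w hw => argminOn_le _ _ hw) (hfF hu) hd).symm⟩

section Action

variable {Γ X : Type*} [Group Γ] [MulAction Γ X] {T : SimpleGraph X}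

def smulHom (hact : ∀ (g : Γ) (x y : X), T.Adj x y → T.Adj (g • x) (g • y)) (g : Γ) :
    T →g T :=
  ⟨(g • ·), hact g _ _⟩

lemma IsTree.exists_smul_eq_of_commute (hT : T.IsTree)
    (hact : ∀ (g : Γ) (x y : X), T.Adj x y → T.Adj (g • x) (g • y)) {a : Γ} {s : Set Γ}
    (hcomm : ∀ h ∈ s, Commute a h) (ha : ∃ y : X, a • y = y) (hs : ∃ x : X, ∀ h ∈ s, h • x = x) :
    ∃ x : X, a • x = x ∧ ∀ h ∈ s, h • x = x := by
  set F : Set X := {x | ∀ h ∈ s, h • x = x}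
  have hF : T.IsPathConvex F := fun u v hu hv p hp w hw h hh =>
    hT.isAcyclic.isPathConvex_fixedPoints (f := smulHom hact h) (MulAction.injective h)
      (hu h hh) (hv h hh) p hp w hw
  have hmaps : MapsTo (smulHom hact a) F F := fun x hx h hh => by
    change h • a • x = a • x
    rw [smul_smul, ← (hcomm h hh).eq, ← smul_smul, hx h hh]
  obtain ⟨y, hy⟩ := ha
  obtain ⟨x, hxF, hx⟩ :=
    hT.exists_isFixedPt_of_mapsTo (MulAction.injective a) hF hs hmaps (y := y) hy
  exact ⟨x, hx, hxF⟩

theorem IsTree.exists_closure_le_stabilizer (hT : T.IsTree)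
    (hact : ∀ (g : Γ) (x y : X), T.Adj x y → T.Adj (g • x) (g • y)) {S : Set Γ}
    (hS : S.Finite) (hcomm : S.Pairwise Commute) (hell : ∀ g ∈ S, ∃ x : X, g • x = x) :
    ∃ x : X, Subgroup.closure S ≤ MulAction.stabilizer Γ x := by
  suffices ∃ x : X, ∀ g ∈ S, g • x = x by
    obtain ⟨x, hx⟩ := this
    exact ⟨x, (Subgroup.closure_le _).2 hx⟩
  induction S, hS using Set.Finite.induction_on with
  | empty =>
    obtain ⟨x⟩ := hT.nonempty
    exact ⟨x, by simp⟩
  | @insert a s has _ ih =>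
    have hcomm_a : ∀ h ∈ s, Commute a h := fun h hh =>
      hcomm (Set.mem_insert a s) (Set.mem_insert_of_mem a hh) (ne_of_mem_of_not_mem hh has).symm
    obtain ⟨x, hxa, hxs⟩ := hT.exists_smul_eq_of_commute hact hcomm_a
      (hell a (Set.mem_insert a s))
      (ih (hcomm.mono (Set.subset_insert a s)) fun g hg => hell g (Set.mem_insert_of_mem a hg))
    exact ⟨x, Set.forall_mem_insert.2 ⟨hxa, hxs⟩⟩

end Action

end SimpleGraph

namespace RAAG

variable {V : Type*} {G : SimpleGraph V}

lemma commute_of_adj_s7 {v w : V} (h : G.Adj v w) :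
    Commute (PresentedGroup.of (rels := raagRels G) v) (PresentedGroup.of w) :=
  commutatorElement_eq_one_iff_commute.mp (PresentedGroup.one_of_mem ⟨v, w, h, rfl⟩)

lemma commute_of_mem_clique {K : Set V} (hK : G.IsClique K) {v w : V} (hv : v ∈ K)
    (hw : w ∈ K) : Commute (PresentedGroup.of (rels := raagRels G) v) (PresentedGroup.of w) := by
  rcases eq_or_ne v w with rfl | hne
  · exact Commute.refl _
  · exact commute_of_adj_s7 (hK hv hw hne)

lemma commute_mul_inv_of_mem_clique {K : Set V} (hK : G.IsClique K) {v w v' w' : V}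
    (hv : v ∈ K) (hw : w ∈ K) (hv' : v' ∈ K) (hw' : w' ∈ K) :
    Commute (PresentedGroup.of (rels := raagRels G) v * (PresentedGroup.of w)⁻¹)
      (PresentedGroup.of v' * (PresentedGroup.of w')⁻¹) :=
  ((commute_of_mem_clique hK hv hv').mul_right (commute_of_mem_clique hK hv hw').inv_right).mul_left
    ((commute_of_mem_clique hK hw hv').mul_right
      (commute_of_mem_clique hK hw hw').inv_right).inv_left

end RAAG

/-- Suppose the Bestvina–Brady group `H_Γ` acts on a tree by graph automorphisms in
such a way that `v * w⁻¹` fixes a vertex for every directed edge `(v, w)` of `Γ`.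
Then for any clique `K` of `Γ`, the subgroup `H_K` generated by the elements
`v * w⁻¹` with both endpoints in `K` fixes a vertex. -/
theorem bb_clique_subgroup_elliptic {V X : Type*} [Fintype V] (G : SimpleGraph V)
    (T : SimpleGraph X) (hT : T.IsTree) [MulAction ((bbHom G).ker) X]
    (hact : ∀ (g : (bbHom G).ker) (x y : X), T.Adj x y → T.Adj (g • x) (g • y))
    (hell : ∀ g : (bbHom G).ker,
      (∃ v w : V, G.Adj v w ∧
        (g : RAAG G) = PresentedGroup.of v * (PresentedGroup.of w)⁻¹) →
      ∃ x : X, g • x = x)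
    (K : Set V) (hK : G.IsClique K) :
    ∃ x : X, ∀ g ∈ Subgroup.closure
      {g : (bbHom G).ker | ∃ v w : V, v ∈ K ∧ w ∈ K ∧ G.Adj v w ∧
        (g : RAAG G) = PresentedGroup.of v * (PresentedGroup.of w)⁻¹},
      g • x = x := by
  set S : Set (bbHom G).ker := {g | ∃ v w : V, v ∈ K ∧ w ∈ K ∧ G.Adj v w ∧
    (g : RAAG G) = PresentedGroup.of v * (PresentedGroup.of w)⁻¹}
  have hfin : S.Finite :=
    ((Set.finite_range fun p : V × V => (PresentedGroup.of p.1 * (PresentedGroup.of p.2)⁻¹ :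
      RAAG G)).preimage Subtype.val_injective.injOn).subset
      fun g ⟨v, w, _, _, _, hg⟩ => ⟨(v, w), hg.symm⟩
  have hcomm : S.Pairwise Commute := by
    rintro g ⟨v, w, hv, hw, -, hg⟩ h ⟨v', w', hv', hw', -, hh⟩ -
    exact Submonoid.commute_coe_coe.mp
      (hg ▸ hh ▸ RAAG.commute_mul_inv_of_mem_clique hK hv hw hv' hw')
  obtain ⟨x, hx⟩ := hT.exists_closure_le_stabilizer hact hfin hcomm
    fun g ⟨v, w, _, _, hvw, hg⟩ => hell g ⟨v, w, hvw, hg⟩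
  exact ⟨x, fun g hg => hx hg⟩
end
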